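/- In the canonical model for LEI with the canonical announcement relation R^φ, every world w has at most one φ-successor: if R^φ w w' and R^φ w w'' then w' = w''. -/
import Mathlib


/-- Formulas of LEI^up: atoms, ¬, ∧, →, the ignorance operator I, and the public
announcement operator `ann φ ψ` (written [φ]ψ). -/
inductive Form where
  | atom : ℕ → Form
  | neg : Form → Form
  | conj : Form → Form → Form
  | impl : Form → Form → Form
  | ig : Form → Form
  | ann : Form → Form → Form

/-- Defined disjunction: φ ∨ ψ := ¬(¬φ ∧ ¬ψ). -/
def Form.disj (φ ψ : Form) : Form := .neg (.conj (.neg φ) (.neg ψ))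

/-- Defined biconditional: φ ↔ ψ := (φ → ψ) ∧ (ψ → φ). -/
def Form.biim (φ ψ : Form) : Form := .conj (.impl φ ψ) (.impl ψ φ)

/-- Hilbert-style derivability for LEI^up from a set of premises Γ: all axioms and rules
of LEI (A1–A14, fact, I∧, emI, Adj, MP, dMP, dTrans, dECQ, IR) together with the
announcement axioms (AI), (dA→), (nI), (nA1), (nA2), (dA∨), (emA), (INV), (nAp1),
(nAp2), (uA) and the rules (nec), (intA1), (intA2), (CN). -/
inductive Deriv : Set Form → Form → Prop where
  | mem {Γ : Set Form} {φ : Form} : φ ∈ Γ → Deriv Γ φ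
  | a1 {Γ} (φ ψ : Form) : Deriv Γ (.impl (.conj φ ψ) φ)
  | a2 {Γ} (φ ψ : Form) : Deriv Γ (.impl (.conj φ ψ) ψ)
  | a3 {Γ} (φ ψ χ : Form) :
      Deriv Γ (.impl (.conj (.impl φ ψ) (.impl φ χ)) (.impl φ (.conj ψ χ)))
  | a4 {Γ} (φ ψ : Form) : Deriv Γ (.impl φ (φ.disj ψ))
  | a5 {Γ} (φ ψ : Form) : Deriv Γ (.impl ψ (φ.disj ψ))
  | a6 {Γ} (φ ψ χ : Form) :
      Deriv Γ (.impl (.conj (.impl φ χ) (.impl ψ χ)) (.impl (φ.disj ψ) χ))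
  | a7 {Γ} (φ ψ χ : Form) :
      Deriv Γ (.impl (.conj φ (ψ.disj χ)) ((Form.conj φ ψ).disj (Form.conj φ χ)))
  | a8 {Γ} (φ ψ : Form) : Deriv Γ ((Form.neg (φ.disj ψ)).biim (.conj (.neg φ) (.neg ψ)))
  | a9 {Γ} (φ ψ : Form) : Deriv Γ ((Form.neg (.conj φ ψ)).biim ((Form.neg φ).disj (Form.neg ψ)))
  | a10 {Γ} (φ : Form) : Deriv Γ (φ.biim (.neg (.neg φ)))
  | a11 {Γ} (φ ψ : Form) : Deriv Γ (.impl (.conj (.impl φ ψ) φ) ψ)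
  | a12 {Γ} (φ ψ : Form) : Deriv Γ (.impl ψ (.impl φ ψ))
  | a13 {Γ} (φ ψ : Form) : Deriv Γ (φ.disj (.impl φ ψ))
  | a14 {Γ} (φ ψ : Form) : Deriv Γ (.impl φ (ψ.disj (.neg (.impl φ ψ))))
  | fact {Γ} (φ : Form) : Deriv Γ (.impl (.ig φ) φ)
  | iconj {Γ} (φ ψ : Form) : Deriv Γ (.impl (.conj (.ig φ) (.ig ψ)) (.ig (φ.disj ψ)))
  | emI {Γ} (φ : Form) : Deriv Γ ((Form.ig φ).disj (.neg (.ig φ)))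
  | aI {Γ} (φ ψ : Form) :
      Deriv Γ (.impl (.conj (.conj φ (.ig (.neg ψ))) (.ann φ (.ig ψ)))
        (.ig (ψ.disj (.neg ψ))))
  | dAimp {Γ} (φ ψ χ : Form) :
      Deriv Γ ((Form.ann φ (.impl ψ χ)).biim (.impl (.ann φ ψ) (.ann φ χ)))
  | nI {Γ} (φ : Form) : Deriv Γ (.ann φ (.neg (.ig φ)))
  | nA1 {Γ} (φ ψ : Form) (p : ℕ) :
      Deriv Γ (.impl (.neg (.ann φ ψ))
        (.ann φ (.impl ψ (.conj (.atom p) (.neg (.atom p))))))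
  | nA2 {Γ} (φ : Form) (p : ℕ) :
      Deriv Γ (.impl (.neg φ) (.ann φ (.conj (.atom p) (.neg (.atom p)))))
  | dAor {Γ} (φ ψ χ : Form) :
      Deriv Γ ((Form.ann φ (ψ.disj χ)).biim ((Form.ann φ ψ).disj (Form.ann φ χ)))
  | emA {Γ} (φ ψ : Form) : Deriv Γ ((Form.ann φ ψ).disj (.neg (.ann φ ψ)))
  | inv {Γ} (φ : Form) (p : ℕ) :
      Deriv Γ (.conj (.impl (.atom p) (.ann φ (.atom p)))
        (.impl (.neg (.atom p)) (.ann φ (.neg (.atom p)))))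
  | nAp1 {Γ} (φ : Form) (p q : ℕ) :
      Deriv Γ (.impl (.neg (.ann φ (.neg (.atom p))))
        ((Form.atom p).disj (.ann φ (.impl (.atom p) (.conj (.atom q) (.neg (.atom q)))))))
  | nAp2 {Γ} (φ : Form) (p q : ℕ) :
      Deriv Γ (.impl (.neg (.ann φ (.atom p)))
        ((Form.neg (.atom p)).disj
          (.ann φ (.impl (.neg (.atom p)) (.conj (.atom q) (.neg (.atom q)))))))
  | uA {Γ} (φ ψ : Form) (p : ℕ) :
      Deriv Γ (.impl (.conj (.ann φ ψ) (.ann φ (.neg ψ)))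
        (.impl φ (.conj (.atom p) (.neg (.atom p)))))
  | adj {Γ} {φ ψ : Form} : Deriv Γ φ → Deriv Γ ψ → Deriv Γ (.conj φ ψ)
  | mp {Γ} {φ ψ : Form} : Deriv Γ (.impl φ ψ) → Deriv Γ φ → Deriv Γ ψ
  | dmp {Γ} {χ φ ψ : Form} :
      Deriv Γ (χ.disj (.impl φ ψ)) → Deriv Γ (χ.disj φ) → Deriv Γ (χ.disj ψ)
  | dtrans {Γ} {ρ φ ψ χ : Form} :
      Deriv Γ (ρ.disj (.impl φ ψ)) → Deriv Γ (ρ.disj (.impl ψ χ)) →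
        Deriv Γ (ρ.disj (.impl φ χ))
  | decq {Γ} {χ φ : Form} (ψ : Form) :
      Deriv Γ (χ.disj (.conj φ (.neg φ))) → Deriv Γ (χ.disj ψ)
  | ir {Γ} {φ ψ : Form} :
      Deriv ∅ (.impl φ ψ) → Deriv Γ (.impl φ (.impl (.ig ψ) (.ig φ)))
  | nec {Γ} {φ : Form} (ψ : Form) : Deriv ∅ φ → Deriv Γ (.ann ψ φ)
  | intA1 {Γ} {φ ψ : Form} : Deriv ∅ (.impl φ ψ) → Deriv Γ (.ann φ (.neg (.ig ψ)))
  | intA2 {Γ} {φ ψ χ : Form} :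
      Deriv ∅ (.impl (.conj φ ψ) χ) →
        Deriv Γ (.impl (.conj ψ (.neg (.ig ψ))) (.ann φ (.neg (.ig χ))))
  | cn {Γ : Set Form} {φ ψ : Form} :
      Deriv Γ (.conj (.ig ψ) (.neg (.ann φ (.ig ψ)))) →
        Deriv {χ | Form.conj χ (.neg (.ig χ)) ∈ Γ} (.impl φ ψ)

/-- A LEI^up-theory: a nontrivial set of formulas closed under derivability and under
the rule "if φ ∈ T or ψ ∈ T then φ ∨ ψ ∈ T". -/
def IsTheory (T : Set Form) : Prop :=
  (∃ φ, φ ∉ T) ∧ (∀ φ, Deriv T φ → φ ∈ T) ∧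
    ∀ φ ψ : Form, (φ ∈ T ∨ ψ ∈ T) → φ.disj ψ ∈ T

/-- A prime theory: φ ∨ ψ ∈ T implies φ ∈ T or ψ ∈ T. -/
def IsPrime (T : Set Form) : Prop := ∀ φ ψ : Form, φ.disj ψ ∈ T → φ ∈ T ∨ ψ ∈ T

/-- A consistent theory: no formula belongs to T together with its negation. -/
def IsConsistent (T : Set Form) : Prop := ∀ φ : Form, ¬(φ ∈ T ∧ Form.neg φ ∈ T)

/-- The canonical accessibility relation: R w w' iff for all χ, Iχ ∈ w implies χ ∉ w'. -/
def CanR (w w' : Set Form) : Prop := ∀ χ : Form, Form.ig χ ∈ w → χ ∉ w'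

/-- The canonical announcement relation R^φ: R^φ w w' iff for every ψ with [φ]ψ ∈ w,
ψ ∈ w' and there is a set w'' with CanR w' w'' which is exactly
{φ} ∪ {χ : ¬Iχ ∧ χ ∈ w}. -/
def CanRA (φ : Form) (w w' : Set Form) : Prop :=
  ∀ ψ : Form, Form.ann φ ψ ∈ w →
    (ψ ∈ w' ∧ ∃ w'' : Set Form, CanR w' w'' ∧
      w'' = insert φ {χ | Form.conj (.neg (.ig χ)) χ ∈ w})

lemma subset_aux (φ : Form) (w w' w'' : Set Form)
    (hwT : IsTheory w) (hwP : IsPrime w)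
    (hw'T : IsTheory w') (hw'C : IsConsistent w')
    (h1 : CanRA φ w w') (h2 : CanRA φ w w'') : w' ⊆ w'' := by
  intro ψ hψ
  by_contra hψ''
  -- [φ]ψ ∉ w
  have hann : Form.ann φ ψ ∉ w := fun h => hψ'' ((h2 ψ h).1)
  -- ¬[φ]ψ ∈ w by emA and primeness
  have hem : (Form.ann φ ψ).disj (.neg (.ann φ ψ)) ∈ w :=
    hwT.2.1 _ (Deriv.emA φ ψ)
  have hneg : Form.neg (.ann φ ψ) ∈ w := by
    rcases hwP _ _ hem with h | h
    · exact absurd h hann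
    · exact h
  -- nA1 gives [φ](ψ → p ∧ ¬p) ∈ w
  have h3 : Form.ann φ (.impl ψ (.conj (.atom 0) (.neg (.atom 0)))) ∈ w :=
    hwT.2.1 _ (Deriv.mp (Deriv.nA1 φ ψ 0) (Deriv.mem hneg))
  -- so ψ → p ∧ ¬p ∈ w'
  have h4 : Form.impl ψ (.conj (.atom 0) (.neg (.atom 0))) ∈ w' := (h1 _ h3).1
  -- MP in w'
  have h5 : Form.conj (.atom 0) (.neg (.atom 0)) ∈ w' :=
    hw'T.2.1 _ (Deriv.mp (Deriv.mem h4) (Deriv.mem hψ))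
  have hp : Form.atom 0 ∈ w' :=
    hw'T.2.1 _ (Deriv.mp (Deriv.a1 _ _) (Deriv.mem h5))
  have hnp : Form.neg (.atom 0) ∈ w' :=
    hw'T.2.1 _ (Deriv.mp (Deriv.a2 _ _) (Deriv.mem h5))
  exact hw'C (.atom 0) ⟨hp, hnp⟩

/-- In the canonical model of LEI^up, every world has at most one φ-successor. -/
theorem stmt17 (φ : Form) (w w' w'' : Set Form)
    (hw : IsTheory w ∧ IsPrime w ∧ IsConsistent w)
    (hw' : IsTheory w' ∧ IsPrime w' ∧ IsConsistent w')
    (hw'' : IsTheory w'' ∧ IsPrime w'' ∧ IsConsistent w'')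
    (h1 : CanRA φ w w') (h2 : CanRA φ w w'') : w' = w'' := by
  apply Set.Subset.antisymm
  · exact subset_aux φ w w' w'' hw.1 hw.2.1 hw'.1 hw'.2.2 h1 h2
  · exact subset_aux φ w w'' w' hw.1 hw.2.1 hw''.1 hw''.2.2 h2 h1
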